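/- arXiv:2506.17650 — 3 statements merged into one kernel-verified Lean document; each statement's English description precedes it below -/
import Mathlib

section
/- For the Pock–Chambolle diagonal preconditioners with parameter β ∈ [0, 2], namely τ_j = 1/∑_{i=1}^m |A_{ij}|^{2-β} and σ_i = 1/∑_{j=1}^n |A_{ij}|^{β}, the scaled matrix satisfies ‖Σ^{1/2} A T^{1/2}‖₂ ≤ 1, where T = Diag(τ) and Σ = Diag(σ). -/
/-!
Write `B = Σ^{1/2} A T^{1/2}` and split each squared entry as
`B i j ^ 2 = (σ i |A i j| ^ β) * (τ j |A i j| ^ (2 - β))`. The first factors have row sums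
`σ i ∑ j |A i j| ^ β ≤ 1` and the second column sums `τ j ∑ i |A i j| ^ (2 - β) ≤ 1`, so the
Schur test (Cauchy–Schwarz in each row, then exchanging the order of summation) bounds the
spectral norm of `B` by `1`.
-/

open Matrix

/-- The spectral norm of a matrix: the operator norm of the induced linear map
between Euclidean spaces. -/
noncomputable def specNorm {m n : ℕ} (B : Matrix (Fin m) (Fin n) ℝ) : ℝ :=
  ‖LinearMap.toContinuousLinearMap (Matrix.toEuclideanLin B)‖

open Finset

theorem sq_sum_mul_le_of_sq_le_mul {κ : Type*} [Fintype κ] (c p q x : κ → ℝ)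
    (hp : ∀ j, 0 ≤ p j) (hq : ∀ j, 0 ≤ q j) (hc : ∀ j, c j ^ 2 ≤ p j * q j) :
    (∑ j, c j * x j) ^ 2 ≤ (∑ j, p j) * ∑ j, q j * x j ^ 2 := by
  have habs : |∑ j, c j * x j| ≤ ∑ j, √(p j) * (√(q j) * |x j|) := by
    refine (abs_sum_le_sum_abs _ _).trans (sum_le_sum fun j _ => ?_)
    rw [abs_mul, ← mul_assoc, ← Real.sqrt_mul (hp j)]
    exact mul_le_mul_of_nonneg_right (Real.abs_le_sqrt (hc j)) (abs_nonneg _)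
  calc (∑ j, c j * x j) ^ 2 = |∑ j, c j * x j| ^ 2 := (sq_abs _).symm
    _ ≤ (∑ j, √(p j) * (√(q j) * |x j|)) ^ 2 := pow_le_pow_left₀ (abs_nonneg _) habs 2
    _ ≤ (∑ j, √(p j) ^ 2) * ∑ j, (√(q j) * |x j|) ^ 2 := sum_mul_sq_le_sq_mul_sq _ _ _
    _ = (∑ j, p j) * ∑ j, q j * x j ^ 2 := by
      simp_rw [mul_pow, sq_abs, Real.sq_sqrt (hp _), Real.sq_sqrt (hq _)]

/-- The Schur test. -/
theorem sum_sq_mulVec_le_of_sq_le_mul {ι κ : Type*} [Fintype ι] [Fintype κ]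
    (B : Matrix ι κ ℝ) (p q : ι → κ → ℝ) (hp : ∀ i j, 0 ≤ p i j) (hq : ∀ i j, 0 ≤ q i j)
    (hB : ∀ i j, B i j ^ 2 ≤ p i j * q i j) {a b : ℝ} (ha : 0 ≤ a)
    (hrow : ∀ i, ∑ j, p i j ≤ a) (hcol : ∀ j, ∑ i, q i j ≤ b) (x : κ → ℝ) :
    ∑ i, (B *ᵥ x) i ^ 2 ≤ a * b * ∑ j, x j ^ 2 := by
  have hqx : ∀ i, 0 ≤ ∑ j, q i j * x j ^ 2 := fun i =>
    sum_nonneg fun j _ => mul_nonneg (hq i j) (sq_nonneg _)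
  calc ∑ i, (B *ᵥ x) i ^ 2 ≤ ∑ i, (∑ j, p i j) * ∑ j, q i j * x j ^ 2 :=
        sum_le_sum fun i _ => sq_sum_mul_le_of_sq_le_mul _ _ _ x (hp i) (hq i) (hB i)
    _ ≤ ∑ i, a * ∑ j, q i j * x j ^ 2 :=
        sum_le_sum fun i _ => mul_le_mul_of_nonneg_right (hrow i) (hqx i)
    _ = a * ∑ j, (∑ i, q i j) * x j ^ 2 := by
        simp_rw [← mul_sum, sum_mul]
        rw [sum_comm]
    _ ≤ a * ∑ j, b * x j ^ 2 := by
        gcongr with j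
        exact hcol j
    _ = a * b * ∑ j, x j ^ 2 := by rw [← mul_sum, mul_assoc]

theorem specNorm_le_of_sum_sq_mulVec_le {m n : ℕ} (B : Matrix (Fin m) (Fin n) ℝ) {c : ℝ}
    (hc : 0 ≤ c) (h : ∀ x : Fin n → ℝ, ∑ i, (B *ᵥ x) i ^ 2 ≤ c ^ 2 * ∑ j, x j ^ 2) :
    specNorm B ≤ c := by
  refine ContinuousLinearMap.opNorm_le_bound _ hc fun x => ?_
  rw [EuclideanSpace.norm_eq, EuclideanSpace.norm_eq, ← Real.sqrt_sq hc,
    ← Real.sqrt_mul (sq_nonneg _)]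
  gcongr
  simpa [Real.norm_eq_abs, sq_abs] using h x

/-- Also true at `a = 0` despite `0 ^ 0 = 1`, because the exponents add up to `2 ≠ 0`. -/
theorem abs_rpow_mul_abs_rpow_two_sub (a β : ℝ) : |a| ^ β * |a| ^ (2 - β) = a ^ 2 := by
  rw [← Real.rpow_add' (abs_nonneg a) (by norm_num), add_sub_cancel, Real.rpow_two, sq_abs]

theorem pock_chambolle_specNorm_le_one_general {m n : ℕ}
    (A : Matrix (Fin m) (Fin n) ℝ) (β : ℝ)
    (τ : Fin n → ℝ) (σ : Fin m → ℝ)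
    (hτ : ∀ j, τ j = (∑ i, |A i j| ^ (2 - β))⁻¹)
    (hσ : ∀ i, σ i = (∑ j, |A i j| ^ β)⁻¹) :
    specNorm (Matrix.diagonal (fun i => Real.sqrt (σ i)) * A *
      Matrix.diagonal (fun j => Real.sqrt (τ j))) ≤ 1 := by
  have hτ0 : ∀ j, 0 ≤ τ j := fun j => by rw [hτ]; positivity
  have hσ0 : ∀ i, 0 ≤ σ i := fun i => by rw [hσ]; positivity
  have hentry : ∀ i j, (diagonal (fun i => √(σ i)) * A * diagonal (fun j => √(τ j))) i j ^ 2 =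
      σ i * |A i j| ^ β * (τ j * |A i j| ^ (2 - β)) := fun i j => by
    rw [mul_diagonal, diagonal_mul, mul_pow, mul_pow, Real.sq_sqrt (hσ0 i),
      Real.sq_sqrt (hτ0 j), ← abs_rpow_mul_abs_rpow_two_sub (A i j) β]
    ring
  refine specNorm_le_of_sum_sq_mulVec_le _ zero_le_one fun x => ?_
  simpa using sum_sq_mulVec_le_of_sq_le_mul (a := 1) (b := 1) _
    (fun i j => σ i * |A i j| ^ β) (fun i j => τ j * |A i j| ^ (2 - β))
    (fun i j => mul_nonneg (hσ0 i) (by positivity)) (fun i j => mul_nonneg (hτ0 j) (by positivity))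
    (fun i j => (hentry i j).le) zero_le_one
    (fun i => by rw [← mul_sum, hσ]; exact inv_mul_le_one)
    (fun j => by rw [← mul_sum, hτ]; exact inv_mul_le_one) x

/-- for the Pock–Chambolle diagonal preconditioners with parameter
`β ∈ [0,2]`, the rescaled matrix satisfies `‖Σ^{1/2} A T^{1/2}‖₂ ≤ 1`. -/
theorem pock_chambolle_specNorm_le_one {m n : ℕ}
    (A : Matrix (Fin m) (Fin n) ℝ) (β : ℝ) (hβ0 : 0 ≤ β) (hβ2 : β ≤ 2)
    (hrow : ∀ i, ∃ j, A i j ≠ 0) (hcol : ∀ j, ∃ i, A i j ≠ 0)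
    (τ : Fin n → ℝ) (σ : Fin m → ℝ)
    (hτ : ∀ j, τ j = (∑ i, |A i j| ^ (2 - β))⁻¹)
    (hσ : ∀ i, σ i = (∑ j, |A i j| ^ β)⁻¹) :
    specNorm (Matrix.diagonal (fun i => Real.sqrt (σ i)) * A *
      Matrix.diagonal (fun j => Real.sqrt (τ j))) ≤ 1 :=
  pock_chambolle_specNorm_le_one_general A β τ σ hτ hσ
end

section
/- At any point T = Diag(t) with t ∈ ℝ^n such that every component of x^{k+1/2}(T) = x^k - T g is nonzero (g = c - A^T λ^k), the primal loss ℓ^p_k(T) = L(proj_{ℝ^n_+}(x^k - T g), λ^k) - L(x^k, λ^k) is differentiable in t with partial derivative ∂ℓ^p_k/∂t_j = -g_j² · 𝟙{(x^k - T g)_j ≥ 0}. -/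
open Matrix

/-- Lagrangian `L(x, λ) = cᵀx - λᵀAx + bᵀλ`. -/
noncomputable def Lagr {m n : ℕ} (A : Matrix (Fin m) (Fin n) ℝ) (b : Fin m → ℝ)
    (c : Fin n → ℝ) (x : Fin n → ℝ) (lam : Fin m → ℝ) : ℝ :=
  c ⬝ᵥ x - lam ⬝ᵥ (A.mulVec x) + b ⬝ᵥ lam

/-- Componentwise projection onto the nonnegative orthant. -/
def projPos {n : ℕ} (y : Fin n → ℝ) : Fin n → ℝ := fun j => max (y j) 0

/-! Since `L(·, λ)` is affine with gradient `g`, the primal loss is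
`∑ⱼ gⱼ (max (xⱼ - tⱼ gⱼ) 0 - xⱼ)`, a sum of functions of one coordinate `tⱼ` each.
Where `xⱼ - tⱼ gⱼ ≠ 0`, `max · 0` is locally constant or locally the identity, so
the `j`-th summand has derivative `gⱼ · 𝟙{xⱼ - tⱼ gⱼ ≥ 0} · (-gⱼ)`. -/

theorem hasDerivAt_max_zero {s : ℝ} (hs : s ≠ 0) :
    HasDerivAt (fun s => max s 0) (if 0 ≤ s then 1 else 0) s := by
  rcases hs.lt_or_gt with hneg | hpos
  · rw [if_neg hneg.not_ge]
    refine (hasDerivAt_const s 0).congr_of_eventuallyEq ?_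
    filter_upwards [eventually_lt_nhds hneg] with r hr using max_eq_right hr.le
  · rw [if_pos hpos.le]
    refine (hasDerivAt_id s).congr_of_eventuallyEq ?_
    filter_upwards [eventually_gt_nhds hpos] with r hr using max_eq_left hr.le

section SeparableSum

variable {𝕜 ι : Type*} [NontriviallyNormedField 𝕜] [Fintype ι]

theorem hasFDerivAt_sum_comp_apply {f : ι → 𝕜 → 𝕜} {f' : ι → 𝕜} {t : ι → 𝕜}
    (hf : ∀ j, HasDerivAt (f j) (f' j) (t j)) :
    HasFDerivAt (fun t => ∑ j, f j (t j))
      (∑ j, f' j • ContinuousLinearMap.proj (R := 𝕜) (φ := fun _ : ι => 𝕜) j) t :=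
  HasFDerivAt.fun_sum fun j _ => (hf j).comp_hasFDerivAt t (hasFDerivAt_apply j t)

theorem sum_smul_proj_apply_single [DecidableEq ι] (f' : ι → 𝕜) (i : ι) :
    (∑ j, f' j • ContinuousLinearMap.proj (R := 𝕜) (φ := fun _ : ι => 𝕜) j) (Pi.single i 1)
      = f' i := by
  simp [_root_.sum_apply, Pi.single_apply]

end SeparableSum

theorem Lagr_sub_Lagr {m n : ℕ} (A : Matrix (Fin m) (Fin n) ℝ) (b : Fin m → ℝ)
    (c : Fin n → ℝ) (x y : Fin n → ℝ) (lam : Fin m → ℝ) :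
    Lagr A b c y lam - Lagr A b c x lam = (c - Aᵀ *ᵥ lam) ⬝ᵥ (y - x) := by
  simp only [Lagr, dotProduct_mulVec, ← mulVec_transpose, sub_dotProduct, dotProduct_sub]
  ring

/-- at any `T = Diag(t)` such that every component of
`x - Tg` is nonzero (`g = c - Aᵀλ`), the primal loss
`ℓᵖ(T) = L(proj(x - Tg), λ) - L(x, λ)` is differentiable in `t` with partial
derivatives `∂ℓᵖ/∂tⱼ = -gⱼ² · 𝟙{(x - Tg)ⱼ ≥ 0}`. -/
theorem primal_loss_partial_derivatives {m n : ℕ}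
    (A : Matrix (Fin m) (Fin n) ℝ) (b : Fin m → ℝ) (c : Fin n → ℝ)
    (x : Fin n → ℝ) (lam : Fin m → ℝ)
    (g : Fin n → ℝ) (hg : g = c - Aᵀ.mulVec lam)
    (lp : (Fin n → ℝ) → ℝ)
    (hlp : lp = fun t =>
      Lagr A b c (projPos (x - (Matrix.diagonal t).mulVec g)) lam - Lagr A b c x lam)
    (t : Fin n → ℝ)
    (hnz : ∀ j, x j - t j * g j ≠ 0) :
    ∃ D : (Fin n → ℝ) →L[ℝ] ℝ, HasFDerivAt lp D t ∧
      ∀ j, D (Pi.single j 1) =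
        -(g j) ^ 2 * (if 0 ≤ x j - t j * g j then (1 : ℝ) else 0) := by
  have hlp_sum : lp = fun t => ∑ j, g j * (max (x j - t j * g j) 0 - x j) := by
    ext t
    simp only [hlp, Lagr_sub_Lagr, ← hg]
    simp only [dotProduct, projPos, Pi.sub_apply, mulVec_diagonal]
  have hderiv : ∀ j, HasDerivAt (fun s => g j * (max (x j - s * g j) 0 - x j))
      (-(g j) ^ 2 * (if 0 ≤ x j - t j * g j then 1 else 0)) (t j) := by
    intro j
    have hproj := (hasDerivAt_max_zero (hnz j)).comp (t j)
      ((hasDerivAt_mul_const (g j)).const_sub (x j))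
    exact ((hproj.sub_const (x j)).const_mul (g j)).congr_deriv (by ring)
  subst hlp_sum
  exact ⟨_, hasFDerivAt_sum_comp_apply hderiv, sum_smul_proj_apply_single _⟩
end

section
/- For the normalized primal loss ℓ̄^p(T) = [L(x⁺(T), λ) - L(x, λ)] / ‖c - A^Tλ‖² with x⁺(T) = proj_{ℝ^n_+}(x - T(c - A^Tλ)), x ≥ 0, and g = c - A^Tλ ≠ 0, the loss is bounded: -‖T‖₂ ≤ ℓ̄^p(T) ≤ 0 for any nonnegative diagonal T. -/
open Matrix

theorem mul_max_sub_mul_sub_mem_Icc {x t g : ℝ} (hx : 0 ≤ x) (ht : 0 ≤ t) :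
    g * (max (x - t * g) 0 - x) ∈ Set.Icc (-(t * g ^ 2)) 0 := by
  rcases le_or_gt 0 (x - t * g) with hstep | hclip
  · rw [max_eq_left hstep]
    constructor <;> nlinarith [sq_nonneg g]
  · have hg : 0 < g := by nlinarith
    rw [max_eq_right hclip.le]
    constructor <;> nlinarith

theorem projPos_sub_diagonal_mulVec_apply {n : ℕ} (x t g : Fin n → ℝ) (j : Fin n) :
    projPos (x - diagonal t *ᵥ g) j = max (x j - t j * g j) 0 := by
  simp [projPos, mulVec_diagonal]

theorem dotProduct_projPos_step_sub_nonpos {n : ℕ} {x t : Fin n → ℝ} (hx : ∀ j, 0 ≤ x j)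
    (ht : ∀ j, 0 ≤ t j) (g : Fin n → ℝ) :
    g ⬝ᵥ (projPos (x - diagonal t *ᵥ g) - x) ≤ 0 :=
  Finset.sum_nonpos fun j _ => by
    simpa only [Pi.sub_apply, projPos_sub_diagonal_mulVec_apply] using
      (mul_max_sub_mul_sub_mem_Icc (g := g j) (hx j) (ht j)).2

theorem neg_iSup_mul_dotProduct_self_le_dotProduct_projPos_step_sub {n : ℕ} {x t : Fin n → ℝ}
    (hx : ∀ j, 0 ≤ x j) (ht : ∀ j, 0 ≤ t j) (g : Fin n → ℝ) :
    -((⨆ j, t j) * (g ⬝ᵥ g)) ≤ g ⬝ᵥ (projPos (x - diagonal t *ᵥ g) - x) := by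
  have ht_le : ∀ j, t j ≤ ⨆ j, t j := le_ciSup (Set.finite_range t).bddAbove
  rw [dotProduct, dotProduct, Finset.mul_sum, ← Finset.sum_neg_distrib]
  refine Finset.sum_le_sum fun j _ => ?_
  calc -((⨆ j, t j) * (g j * g j)) ≤ -(t j * g j ^ 2) := by
        rw [← sq]; exact neg_le_neg (mul_le_mul_of_nonneg_right (ht_le j) (sq_nonneg _))
    _ ≤ g j * (projPos (x - diagonal t *ᵥ g) - x) j := by
        simpa only [Pi.sub_apply, projPos_sub_diagonal_mulVec_apply] using
          (mul_max_sub_mul_sub_mem_Icc (g := g j) (hx j) (ht j)).1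

theorem EuclideanSpace.norm_equiv_symm_sq {ι : Type*} [Fintype ι] (g : ι → ℝ) :
    ‖(EuclideanSpace.equiv ι ℝ).symm g‖ ^ 2 = g ⬝ᵥ g := by
  rw [EuclideanSpace.real_norm_sq_eq]
  simp [dotProduct, sq]

theorem normalized_primal_loss_bounds_general {m n : ℕ}
    (A : Matrix (Fin m) (Fin n) ℝ) (b : Fin m → ℝ) (c : Fin n → ℝ)
    (x : Fin n → ℝ) (lam : Fin m → ℝ) (hx : ∀ j, 0 ≤ x j)
    (g : Fin n → ℝ) (hg : g = c - Aᵀ.mulVec lam)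
    (t : Fin n → ℝ) (ht : ∀ j, 0 ≤ t j)
    (lbar : ℝ)
    (hlbar : lbar =
      (Lagr A b c (projPos (x - (Matrix.diagonal t).mulVec g)) lam -
        Lagr A b c x lam) / ‖(EuclideanSpace.equiv (Fin n) ℝ).symm g‖ ^ 2) :
    -(⨆ j, t j) ≤ lbar ∧ lbar ≤ 0 := by
  rw [hlbar, Lagr_sub_Lagr, ← hg, EuclideanSpace.norm_equiv_symm_sq]
  have hgg : 0 ≤ g ⬝ᵥ g := Finset.sum_nonneg fun j _ => mul_self_nonneg (g j)
  have hupper := dotProduct_projPos_step_sub_nonpos hx ht g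
  have hlower := neg_iSup_mul_dotProduct_self_le_dotProduct_projPos_step_sub hx ht g
  refine ⟨?_, div_nonpos_of_nonpos_of_nonneg hupper hgg⟩
  have := div_le_of_le_mul₀ hgg (Real.iSup_nonneg ht) (neg_le.mp hlower)
  rwa [neg_div, neg_le] at this

/-- the normalized primal loss
`ℓ̄ᵖ(T) = (L(x⁺(T), λ) - L(x, λ)) / ‖c - Aᵀλ‖²`, with
`x⁺(T) = proj_{ℝ^n_+}(x - T(c - Aᵀλ))`, `x ≥ 0` and `g = c - Aᵀλ ≠ 0`, is
bounded: `-‖T‖₂ ≤ ℓ̄ᵖ(T) ≤ 0` for any nonnegative diagonal `T = Diag(t)`,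
where `‖T‖₂ = maxⱼ tⱼ`. -/
theorem normalized_primal_loss_bounds {m n : ℕ}
    (A : Matrix (Fin m) (Fin n) ℝ) (b : Fin m → ℝ) (c : Fin n → ℝ)
    (x : Fin n → ℝ) (lam : Fin m → ℝ) (hx : ∀ j, 0 ≤ x j)
    (g : Fin n → ℝ) (hg : g = c - Aᵀ.mulVec lam) (hg0 : g ≠ 0)
    (t : Fin n → ℝ) (ht : ∀ j, 0 ≤ t j)
    (lbar : ℝ)
    (hlbar : lbar =
      (Lagr A b c (projPos (x - (Matrix.diagonal t).mulVec g)) lam -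
        Lagr A b c x lam) / ‖(EuclideanSpace.equiv (Fin n) ℝ).symm g‖ ^ 2) :
    -(⨆ j, t j) ≤ lbar ∧ lbar ≤ 0 :=
  normalized_primal_loss_bounds_general A b c x lam hx g hg t ht lbar hlbar
end
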